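/- Let m ≥ 1 and δ_c ∈ ℂ. The complex matrix obtained from Γ²_{2m} by evaluating δ at δ_c is invertible if and only if δ_c ∉ {0, 1, …, m−1}. -/

import Mathlib

/- Set partitions of a finite set are modelled as equivalence relations, i.e. `Setoid`.
   `nBlocks` is the number of blocks (equivalence classes), `p ⊔ q` is the join,
   `IsEvenPartition` says every block has even cardinality, `T m t` counts even set
   partitions of a `2*m`-element set into exactly `t` blocks, and `Gram2 m` is the Gram
   matrix of the spine standard module of the 2-tonal partition algebra, over `ℂ[δ]`
   (with `δ = Polynomial.X`). -/

open scoped Classical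

noncomputable section

def nBlocks {X : Type*} (s : Setoid X) : ℕ := Nat.card (Quotient s)

def IsEvenPartition {X : Type*} (s : Setoid X) : Prop :=
  ∀ x : X, Even (Nat.card {y : X // s.r x y})

def T (m t : ℕ) : ℕ :=
  Nat.card {s : Setoid (Fin (2 * m)) // IsEvenPartition s ∧ nBlocks s = t}

instance {X : Type*} [Finite X] : Finite (Setoid X) :=
  Finite.of_injective (fun s : Setoid X => (s.r : X → X → Prop)) fun s t h => by
    cases s; cases t; cases h; rfl

noncomputable instance (m : ℕ) : Fintype {s : Setoid (Fin (2 * m)) // IsEvenPartition s} :=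
  Fintype.ofFinite _

def Gram2 (m : ℕ) :
    Matrix {s : Setoid (Fin (2 * m)) // IsEvenPartition s}
      {s : Setoid (Fin (2 * m)) // IsEvenPartition s} (Polynomial ℂ) :=
  Matrix.of fun p q => (Polynomial.X : Polynomial ℂ) ^ nBlocks (p.1 ⊔ q.1)

/-! The Gram matrix factors as `Z * D * Zᵀ`, where `Z` is the zeta matrix of the poset of even
partitions and `D` is diagonal with entries the falling factorials `(δ)_{b(r)}`. The entry
identity is `δ ^ b(j) = ∑_{r ≥ j} (δ)_{b(r)}`: at `δ = N` both sides count the maps from the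
blocks of `j` to `Fin N`, sorted by their kernel, and the coarsenings of an even partition are
even. Since `Z` is unitriangular for any linear extension of the order, the matrix is invertible
iff every `(δ)_{b(r)}` is nonzero; an even partition of `Fin (2 * m)` has at most `m` blocks,
and the partition into pairs has exactly `m`. -/

open scoped Matrix

namespace Matrix

variable {ι R : Type*} [Fintype ι] [DecidableEq ι] [PartialOrder ι] [CommRing R]

theorem det_of_eq_zero_of_not_le (M : Matrix ι ι R) (hM : ∀ i j, ¬i ≤ j → M i j = 0) :
    M.det = ∏ i, M i i := by
  let : Fintype (LinearExtension ι) := ‹Fintype ι›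
  let : DecidableEq (LinearExtension ι) := ‹DecidableEq ι›
  refine det_of_isUpperTriangular (m := LinearExtension ι) (M := M) fun i j hji => hM i j ?_
  exact fun hij => (hji.trans_le ((toLinearExtension (α := ι)).monotone hij)).false

end Matrix

def zetaMatrix (ι R : Type*) [LE ι] [DecidableLE ι] [Zero R] [One R] : Matrix ι ι R :=
  Matrix.of fun i j => if i ≤ j then 1 else 0

theorem det_zetaMatrix (ι R : Type*) [Fintype ι] [DecidableEq ι] [PartialOrder ι] [DecidableLE ι]
    [CommRing R] : (zetaMatrix ι R).det = 1 := by
  rw [Matrix.det_of_eq_zero_of_not_le (zetaMatrix ι R) fun _ _ h => if_neg h]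
  exact Finset.prod_eq_one fun _ _ => if_pos le_rfl

theorem descPochhammer_eval_ne_zero_iff {R : Type*} [CommRing R] [IsDomain R] (n : ℕ) (r : R) :
    (descPochhammer R n).eval r ≠ 0 ↔ ∀ k < n, r ≠ k := by
  simp [descPochhammer_eval_eq_prod_range, Finset.prod_ne_zero_iff, sub_ne_zero]

def Setoid.kerEqEquivEmbedding {X F : Type*} (u : Setoid X) :
    {f : X → F // Setoid.ker f = u} ≃ (Quotient u ↪ F) where
  toFun f := ⟨Quotient.lift f.1 f.2.ge, (Setoid.lift_injective_iff_ker_eq_of_le f.2.ge).2 f.2⟩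
  invFun g := ⟨g ∘ Quotient.mk u, Setoid.ext fun _ _ => g.injective.eq_iff.trans Quotient.eq⟩
  left_inv _ := rfl
  right_inv g := by ext ⟨x⟩; rfl

theorem sum_descFactorial_nBlocks (X F : Type*) [Fintype X] [Fintype (Setoid X)] [Fintype F] :
    ∑ u : Setoid X, (Fintype.card F).descFactorial (nBlocks u) =
      Fintype.card F ^ Fintype.card X := by
  rw [← Fintype.card_fun,
    ← Fintype.card_congr (Equiv.sigmaFiberEquiv (Setoid.ker (α := X) (β := F))),
    Fintype.card_sigma]
  refine Finset.sum_congr rfl fun u _ => ?_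
  rw [Fintype.card_congr (Setoid.kerEqEquivEmbedding u), Fintype.card_embedding_eq, nBlocks,
    Nat.card_eq_fintype_card]

theorem sum_descPochhammer_nBlocks (X R : Type*) [Fintype X] [Fintype (Setoid X)] [CommRing R] :
    ∑ u : Setoid X, descPochhammer R (nBlocks u) = Polynomial.X ^ Fintype.card X := by
  suffices h : ∑ u : Setoid X, descPochhammer ℤ (nBlocks u) = Polynomial.X ^ Fintype.card X by
    simpa [Polynomial.map_sum, descPochhammer_map] using
      congrArg (Polynomial.map (Int.castRingHom R)) h
  refine Polynomial.eq_of_infinite_eval_eq _ _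
    ((Set.infinite_range_of_injective Nat.cast_injective).mono ?_)
  rintro _ ⟨N, rfl⟩
  have hcount := sum_descFactorial_nBlocks X (Fin N)
  rw [Fintype.card_fin] at hcount
  simp only [Set.mem_ofPred_eq, Polynomial.eval_finsetSum, descPochhammer_eval_eq_descFactorial,
    Polynomial.eval_pow, Polynomial.eval_X]
  exact_mod_cast hcount

theorem nBlocks_correspondence {X : Type*} (j : Setoid X) (t : {t : Setoid X // j ≤ t}) :
    nBlocks (Setoid.correspondence j t) = nBlocks t.1 := by
  have : Setoid.correspondence j t = Setoid.ker (Quot.mapRight t.2) :=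
    Setoid.ext fun a b => Quotient.inductionOn₂ a b fun _ _ => (Quotient.eq (r := t.1)).symm
  rw [nBlocks, this]
  exact Nat.card_congr (Setoid.quotientQuotientEquivQuotient j t.1 t.2)

theorem sum_descPochhammer_nBlocks_of_le {X : Type*} [Finite X] (R : Type*) [CommRing R]
    (j : Setoid X) [Fintype {t : Setoid X // j ≤ t}] :
    ∑ t : {t : Setoid X // j ≤ t}, descPochhammer R (nBlocks t.1) =
      Polynomial.X ^ nBlocks j := by
  have : Fintype (Quotient j) := Fintype.ofFinite _
  have : Fintype (Setoid (Quotient j)) := Fintype.ofFinite _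
  rw [Fintype.sum_equiv (Setoid.correspondence j).toEquiv _ (fun u => descPochhammer R (nBlocks u))
    fun t => by rw [← nBlocks_correspondence j t]; rfl, sum_descPochhammer_nBlocks,
    nBlocks, Nat.card_eq_fintype_card]

section Blocks

open Finset

variable {X : Type*} [Fintype X]

theorem card_filter_mk_eq (s : Setoid X) (x : X) :
    #{y | (⟦y⟧ : Quotient s) = ⟦x⟧} = Nat.card {y // s x y} := by
  rw [Nat.card_eq_fintype_card, Fintype.card_subtype]
  congr 1
  ext y
  simp [Quotient.eq, s.comm]

theorem IsEvenPartition.mono {s t : Setoid X} (hs : IsEvenPartition s) (hst : s ≤ t) :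
    IsEvenPartition t := by
  intro x
  rw [Nat.card_eq_fintype_card, Fintype.card_subtype, card_eq_sum_card_image (Quotient.mk s)]
  refine even_sum _ fun b hb => ?_
  obtain ⟨y₀, hy₀, rfl⟩ := mem_image.1 hb
  have hblock : ({y ∈ {y | t x y} | (⟦y⟧ : Quotient s) = ⟦y₀⟧} : Finset X) =
      ({y | (⟦y⟧ : Quotient s) = ⟦y₀⟧} : Finset X) := by
    ext y
    simp only [mem_filter, mem_univ, true_and, and_iff_right_iff_imp] at hy₀ ⊢
    exact fun hy => t.trans hy₀ (hst (Quotient.exact hy.symm))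
  rw [hblock, card_filter_mk_eq]
  exact hs y₀

theorem IsEvenPartition.two_mul_nBlocks_le {s : Setoid X} (hs : IsEvenPartition s) :
    2 * nBlocks s ≤ Fintype.card X := by
  rw [nBlocks, Nat.card_eq_fintype_card, ← card_univ (α := X),
    card_eq_sum_card_fiberwise (f := Quotient.mk s) (t := univ) fun _ _ => mem_univ _,
    mul_comm, ← smul_eq_mul, ← card_univ]
  refine card_nsmul_le_sum _ _ _ fun b _ => ?_
  induction b using Quotient.ind with | _ x
  rw [card_filter_mk_eq]
  obtain ⟨k, hk⟩ := hs x
  have : Nonempty {y // s x y} := ⟨⟨x, s.refl x⟩⟩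
  have : 0 < Nat.card {y // s x y} := Nat.card_pos
  omega

end Blocks

theorem exists_isEvenPartition_nBlocks_eq (m : ℕ) :
    ∃ s : Setoid (Fin (2 * m)), IsEvenPartition s ∧ nBlocks s = m := by
  have hsurj : Function.Surjective (Fin.modNat : Fin (2 * m) → Fin m) := fun j =>
    ⟨finProdFinEquiv (0, j), congrArg Prod.snd (finProdFinEquiv.symm_apply_apply (0, j))⟩
  refine ⟨Setoid.ker Fin.modNat, fun x => ?_, ?_⟩
  · have hblock : {y : Fin (2 * m) // Setoid.ker Fin.modNat x y} ≃ Fin 2 :=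
      (finProdFinEquiv.symm.subtypeEquiv (q := fun p : Fin 2 × Fin m => x.modNat = p.2)
        fun _ => Iff.rfl).trans
        { toFun := fun p => p.1.1
          invFun := fun i => ⟨(i, x.modNat), rfl⟩
          left_inv := fun p => Subtype.ext (Prod.ext rfl p.2)
          right_inv := fun _ => rfl }
    rw [Nat.card_congr hblock, Nat.card_fin]
    exact even_two
  · rw [nBlocks, Nat.card_congr (Setoid.quotientKerEquivOfSurjective _ hsurj), Nat.card_fin]

section EvenGram

variable {X : Type*} [Fintype X] [Fintype {s : Setoid X // IsEvenPartition s}]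
  (R : Type*) [CommRing R]

theorem sum_descPochhammer_nBlocks_of_isEvenPartition_le {j : Setoid X}
    (hj : IsEvenPartition j) :
    ∑ r : {s : Setoid X // IsEvenPartition s},
      (if j ≤ r.1 then descPochhammer R (nBlocks r.1) else 0) = Polynomial.X ^ nBlocks j := by
  have : Fintype {t : Setoid X // j ≤ t} := Fintype.ofFinite _
  rw [← Finset.sum_filter, ← sum_descPochhammer_nBlocks_of_le R j]
  refine Finset.sum_bij' (fun r hr => ⟨r.1, (Finset.mem_filter.1 hr).2⟩)
    (fun t _ => ⟨t.1, hj.mono t.2⟩) ?_ ?_ ?_ ?_ ?_ <;> simp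

theorem gram_eq_zetaMatrix_mul_diagonal_mul_transpose (d : R) :
    Matrix.of (fun p q : {s : Setoid X // IsEvenPartition s} => d ^ nBlocks (p.1 ⊔ q.1)) =
      zetaMatrix _ R * Matrix.diagonal (fun r => (descPochhammer R (nBlocks r.1)).eval d) *
        (zetaMatrix _ R)ᵀ := by
  ext p q
  have hsum := congrArg (Polynomial.eval d)
    (sum_descPochhammer_nBlocks_of_isEvenPartition_le R (p.2.mono (le_sup_left (b := q.1))))
  rw [Polynomial.eval_pow, Polynomial.eval_X] at hsum
  rw [Matrix.of_apply, ← hsum, Polynomial.eval_finsetSum, Matrix.mul_apply]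
  refine Finset.sum_congr rfl fun r _ => ?_
  simp only [Matrix.mul_diagonal, zetaMatrix, Matrix.of_apply, Matrix.transpose_apply, sup_le_iff]
  split_ifs <;> simp_all

end EvenGram

theorem gram2_eval_isUnit_iff_general (m : ℕ) (δc : ℂ) :
    IsUnit ((Gram2 m).map (Polynomial.eval δc)) ↔ ∀ k : ℕ, k < m → δc ≠ (k : ℂ) := by
  have hZ : IsUnit (zetaMatrix {s : Setoid (Fin (2 * m)) // IsEvenPartition s} ℂ) := by
    rw [Matrix.isUnit_iff_isUnit_det, det_zetaMatrix]
    exact isUnit_one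
  have hmap : (Gram2 m).map (Polynomial.eval δc) =
      Matrix.of fun p q => δc ^ nBlocks (p.1 ⊔ q.1) := by
    ext; simp [Gram2]
  rw [hmap, gram_eq_zetaMatrix_mul_diagonal_mul_transpose,
    ((Matrix.isUnit_transpose _).2 hZ).mul_right_iff, hZ.mul_left_iff, Matrix.isUnit_diagonal,
    Pi.isUnit_iff]
  simp only [isUnit_iff_ne_zero, descPochhammer_eval_ne_zero_iff]
  constructor
  · intro h
    obtain ⟨s, hs, hsm⟩ := exists_isEvenPartition_nBlocks_eq m
    simpa [hsm] using h ⟨s, hs⟩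
  · intro h r k hk
    have := r.2.two_mul_nBlocks_le
    rw [Fintype.card_fin] at this
    exact h k (by omega)

theorem gram2_eval_isUnit_iff (m : ℕ) (hm : 1 ≤ m) (δc : ℂ) :
    IsUnit ((Gram2 m).map (Polynomial.eval δc)) ↔ ∀ k : ℕ, k < m → δc ≠ (k : ℂ) :=
  gram2_eval_isUnit_iff_general m δc

end
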